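/- Let o be a unit vector in R^D, P a random orthogonal matrix (Haar-distributed), C = {±1/√D}^D, and ⟨ō,o⟩ = max over x∈C of ⟨Px, o⟩ = (1/√D)‖P⁻¹o‖₁. Then E[⟨ō, o⟩] = √(D/π)·2Γ(D/2)/((D-1)·Γ((D-1)/2)). -/

import Mathlib

/-!
Average `|⟪x, g⟫| * exp (-‖g‖ ^ 2)` over `x ∼ μ` and Lebesgue `g`, in both orders (Fubini).
For a fixed unit `x`, an isometry moving `x` to a coordinate vector turns the Gaussian integral
into a product of one-dimensional ones, worth `√π ^ (n - 1)`. For a fixed `g`, the rotation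
invariance of `μ` gives `‖g‖ * E|x i|`, and the radial integral of `‖g‖ * exp (-‖g‖ ^ 2)` is
`√π ^ n * Γ((n + 1) / 2) / Γ(n / 2)`. Hence `E|x i| = Γ(n / 2) / (√π * Γ((n + 1) / 2))`, and the
`D` coordinates add up to the claim.
-/

open MeasureTheory Real
open scoped RealInnerProductSpace

section InnerProductSpace

variable {E : Type*} [NormedAddCommGroup E] [InnerProductSpace ℝ E]

theorem exists_linearIsometryEquiv_apply_eq {u v : E} (h : ‖u‖ = ‖v‖) :
    ∃ f : E ≃ₗᵢ[ℝ] E, f u = v :=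
  ⟨Submodule.reflection (ℝ ∙ (u - v))ᗮ, Submodule.reflection_sub h⟩

variable [MeasurableSpace E] [BorelSpace E]

theorem integral_abs_inner_mul_eq_of_map_eq {ν : Measure E}
    (hν : ∀ f : E ≃ₗᵢ[ℝ] E, ν.map f = ν) {e : E} (he : ‖e‖ = 1) (w : ℝ → ℝ) (g : E) :
    ∫ x, |⟪x, g⟫| * w ‖x‖ ∂ν = ‖g‖ * ∫ x, |⟪e, x⟫| * w ‖x‖ ∂ν := by
  rcases eq_or_ne g 0 with rfl | hg
  · simp
  have hg' : ‖g‖ ≠ 0 := norm_ne_zero_iff.mpr hg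
  obtain ⟨f, hf⟩ := exists_linearIsometryEquiv_apply_eq (u := e) (v := ‖g‖⁻¹ • g)
    (by simp [norm_smul, he, hg'])
  have hfg : f (‖g‖ • e) = g := by rw [map_smul, hf, smul_smul, mul_inv_cancel₀ hg', one_smul]
  have hmp : MeasurePreserving f ν ν := ⟨f.continuous.measurable, hν f⟩
  rw [← hmp.integral_comp f.toHomeomorph.measurableEmbedding, ← integral_const_mul]
  congr 1 with x
  have hinner : ⟪f x, g⟫ = ‖g‖ * ⟪e, x⟫ := by
    conv_lhs => rw [← hfg]
    rw [f.inner_map_map, real_inner_smul_right, real_inner_comm]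
  rw [hinner, f.norm_map, abs_mul, abs_norm, mul_assoc]

end InnerProductSpace

theorem pow_pred_smul_mul_exp_neg_sq {n : ℕ} (hn : 0 < n) (y : ℝ) :
    y ^ (n - 1) • (y * exp (-y ^ 2)) = y ^ (n : ℝ) * exp (-y ^ (2 : ℝ)) := by
  rw [smul_eq_mul, ← mul_assoc, ← pow_succ, Nat.sub_add_cancel hn, rpow_natCast, rpow_two]

theorem integral_Ioi_pow_pred_smul_mul_exp_neg_sq {n : ℕ} (hn : 0 < n) :
    ∫ y in Set.Ioi 0, y ^ (n - 1) • (y * exp (-y ^ 2)) = Gamma ((n + 1) / 2) / 2 := by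
  simp_rw [pow_pred_smul_mul_exp_neg_sq hn]
  rw [integral_rpow_mul_exp_neg_rpow two_pos (neg_one_lt_zero.trans_le (by positivity))]
  ring

theorem integral_abs_mul_exp_neg_sq : ∫ t : ℝ, |t| * exp (-t ^ 2) = 1 := by
  have h := integral_Ioi_pow_pred_smul_mul_exp_neg_sq (n := 1) one_pos
  norm_num at h
  have habs : (fun t : ℝ => |t| * exp (-t ^ 2)) = fun t => (fun s => s * exp (-s ^ 2)) |t| := by
    simp [sq_abs]
  rw [habs, integral_comp_abs (f := fun s => s * exp (-s ^ 2)), h]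
  norm_num

section EuclideanSpace

variable {ι : Type*} [Fintype ι]

theorem integrable_norm_mul_exp_neg_sq_norm [Nonempty ι] :
    Integrable fun g : EuclideanSpace ℝ ι => ‖g‖ * exp (-‖g‖ ^ 2) := by
  rw [integrable_fun_norm_addHaar volume (f := fun r => r * exp (-r ^ 2)),
    finrank_euclideanSpace]
  simp_rw [pow_pred_smul_mul_exp_neg_sq Fintype.card_pos]
  exact integrableOn_rpow_mul_exp_neg_rpow (neg_one_lt_zero.trans_le (by positivity)) two_pos

theorem integral_norm_mul_exp_neg_sq_norm [Nonempty ι] :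
    ∫ g : EuclideanSpace ℝ ι, ‖g‖ * exp (-‖g‖ ^ 2) =
      √π ^ Fintype.card ι * Gamma ((Fintype.card ι + 1) / 2) / Gamma (Fintype.card ι / 2) := by
  rw [integral_fun_norm_addHaar volume (fun r => r * exp (-r ^ 2)), finrank_euclideanSpace,
    integral_Ioi_pow_pred_smul_mul_exp_neg_sq Fintype.card_pos, measureReal_def,
    EuclideanSpace.volume_ball]
  have hΓ : Gamma (Fintype.card ι / 2 + 1) = Fintype.card ι / 2 * Gamma (Fintype.card ι / 2) :=
    Gamma_add_one (by positivity)
  have : 0 < Gamma (Fintype.card ι / 2) := Gamma_pos_of_pos (by positivity)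
  simp only [ENNReal.ofReal_one, one_pow, one_mul, nsmul_eq_mul, smul_eq_mul, hΓ]
  rw [ENNReal.toReal_ofReal (by positivity)]
  field_simp

theorem integral_abs_apply_mul_exp_neg_sq_norm [DecidableEq ι] (i : ι) :
    ∫ g : EuclideanSpace ℝ ι, |g i| * exp (-‖g‖ ^ 2) = √π ^ (Fintype.card ι - 1) := by
  let φ : ι → ℝ → ℝ := fun j t => (if j = i then |t| else 1) * exp (-t ^ 2)
  have hprod (y : ι → ℝ) : ∏ j, φ j (y j) = |y i| * exp (-‖WithLp.toLp 2 y‖ ^ 2) := by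
    rw [EuclideanSpace.norm_eq, sq_sqrt (by positivity)]
    simp only [φ, Finset.prod_mul_distrib, Finset.prod_ite_eq', Finset.mem_univ, if_true,
      ← Finset.sum_neg_distrib, exp_sum, norm_eq_abs, sq_abs]
  have hφ (j : ι) : ∫ t, φ j t = if j = i then 1 else √π := by
    split_ifs with h
    · simpa [φ, h] using integral_abs_mul_exp_neg_sq
    · simpa [φ, h] using integral_gaussian 1
  rw [← (PiLp.volume_preserving_toLp ι).integral_comp
    (MeasurableEquiv.toLp 2 _).measurableEmbedding]
  simp only [← hprod]
  rw [integral_fintype_prod_volume_eq_prod]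
  simp [hφ, Finset.prod_ite, Finset.filter_ne']

theorem integral_abs_inner_mul_eq_integral_abs_apply [DecidableEq ι]
    {ν : Measure (EuclideanSpace ℝ ι)}
    (hν : ∀ f : EuclideanSpace ℝ ι ≃ₗᵢ[ℝ] EuclideanSpace ℝ ι, ν.map f = ν) (w : ℝ → ℝ)
    (g : EuclideanSpace ℝ ι) (i : ι) :
    ∫ x, |⟪x, g⟫| * w ‖x‖ ∂ν = ‖g‖ * ∫ x, |x i| * w ‖x‖ ∂ν := by
  simpa [EuclideanSpace.inner_single_left] using
    integral_abs_inner_mul_eq_of_map_eq hν (e := EuclideanSpace.single i 1) (by simp) w g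

theorem integral_abs_inner_mul_exp_neg_sq_norm [Nonempty ι] (x : EuclideanSpace ℝ ι) :
    ∫ g : EuclideanSpace ℝ ι, |⟪x, g⟫| * exp (-‖g‖ ^ 2) = ‖x‖ * √π ^ (Fintype.card ι - 1) := by
  classical
  obtain ⟨i⟩ := ‹Nonempty ι›
  simp_rw [real_inner_comm _ x]
  rw [integral_abs_inner_mul_eq_integral_abs_apply (fun f => f.measurePreserving.map_eq)
    (fun r => exp (-r ^ 2)) x i, integral_abs_apply_mul_exp_neg_sq_norm]

theorem integral_abs_apply_mul_integral_norm_mul_exp_neg_sq_norm [DecidableEq ι]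
    {μ : Measure (EuclideanSpace ℝ ι)} [IsFiniteMeasure μ] (hsupp : ∀ᵐ x ∂μ, ‖x‖ = 1)
    (hinv : ∀ f : EuclideanSpace ℝ ι ≃ₗᵢ[ℝ] EuclideanSpace ℝ ι, μ.map f = μ) (i : ι) :
    (∫ x, |x i| ∂μ) * ∫ g : EuclideanSpace ℝ ι, ‖g‖ * exp (-‖g‖ ^ 2) =
      μ.real Set.univ * √π ^ (Fintype.card ι - 1) := by
  have : Nonempty ι := ⟨i⟩
  let F : EuclideanSpace ℝ ι × EuclideanSpace ℝ ι → ℝ := fun z => |⟪z.1, z.2⟫| * exp (-‖z.2‖ ^ 2)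
  have hF : Integrable F (μ.prod volume) := by
    have hnorm : Integrable (fun x : EuclideanSpace ℝ ι => ‖x‖) μ :=
      .of_bound (by fun_prop) 1 (hsupp.mono fun x hx => by simp [hx])
    refine (hnorm.mul_prod integrable_norm_mul_exp_neg_sq_norm).mono' (by fun_prop)
      (.of_forall fun z => ?_)
    calc ‖F z‖ = |⟪z.1, z.2⟫| * exp (-‖z.2‖ ^ 2) := by simp [F]
      _ ≤ ‖z.1‖ * ‖z.2‖ * exp (-‖z.2‖ ^ 2) := by gcongr; exact abs_real_inner_le_norm _ _
      _ = ‖z.1‖ * (‖z.2‖ * exp (-‖z.2‖ ^ 2)) := mul_assoc _ _ _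
  have hleft : ∫ x, (∫ g, F (x, g)) ∂μ = μ.real Set.univ * √π ^ (Fintype.card ι - 1) := by
    rw [← smul_eq_mul, ← integral_const]
    refine integral_congr_ae (hsupp.mono fun x hx => ?_)
    simp [F, integral_abs_inner_mul_exp_neg_sq_norm, hx]
  have hright : ∫ g, ∫ x, F (x, g) ∂μ =
      (∫ x, |x i| ∂μ) * ∫ g : EuclideanSpace ℝ ι, ‖g‖ * exp (-‖g‖ ^ 2) := by
    rw [← integral_const_mul]
    congr 1 with g
    have h := integral_abs_inner_mul_eq_integral_abs_apply hinv (fun _ => 1) g i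
    simp only [mul_one] at h
    simp only [F, integral_mul_const, h]
    ring
  rw [← hright, ← integral_integral_swap hF, hleft]

theorem integral_abs_apply_of_map_eq [DecidableEq ι]
    {μ : Measure (EuclideanSpace ℝ ι)} [IsFiniteMeasure μ] (hsupp : ∀ᵐ x ∂μ, ‖x‖ = 1)
    (hinv : ∀ f : EuclideanSpace ℝ ι ≃ₗᵢ[ℝ] EuclideanSpace ℝ ι, μ.map f = μ) (i : ι) :
    ∫ x, |x i| ∂μ =
      μ.real Set.univ * Gamma (Fintype.card ι / 2) / (√π * Gamma ((Fintype.card ι + 1) / 2)) := by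
  have : Nonempty ι := ⟨i⟩
  have h := integral_abs_apply_mul_integral_norm_mul_exp_neg_sq_norm hsupp hinv i
  rw [integral_norm_mul_exp_neg_sq_norm, ← pow_sub_one_mul Fintype.card_ne_zero] at h
  have : 0 < Gamma ((Fintype.card ι + 1) / 2) := Gamma_pos_of_pos (by positivity)
  have : 0 < Gamma (Fintype.card ι / 2) := Gamma_pos_of_pos (by positivity)
  have : 0 < √π := sqrt_pos.mpr pi_pos
  field_simp at h ⊢
  linear_combination h

end EuclideanSpace

/-- `μ` is the law of `P⁻¹o`, the uniform measure on the unit sphere, characterized as a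
rotation-invariant probability measure carried by the sphere; `⟨ō, o⟩ = (1/√D)·‖P⁻¹o‖₁`. -/
theorem expected_inner_quantized (D : ℕ) (hD : 3 ≤ D)
    (μ : Measure (EuclideanSpace ℝ (Fin D))) [IsProbabilityMeasure μ]
    (hsupp : μ {x | ‖x‖ ≠ 1} = 0)
    (hinv : ∀ f : EuclideanSpace ℝ (Fin D) ≃ₗᵢ[ℝ] EuclideanSpace ℝ (Fin D),
      μ.map f = μ) :
    ∫ x, (1 / Real.sqrt D) * ∑ i, |x i| ∂μ =
      Real.sqrt ((D : ℝ) / Real.pi) * (2 * Real.Gamma (D / 2)) /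
        (((D : ℝ) - 1) * Real.Gamma ((D - 1) / 2)) := by
  have hae : ∀ᵐ x ∂μ, ‖x‖ = 1 := ae_iff.mpr hsupp
  have hint (i : Fin D) : Integrable (fun x : EuclideanSpace ℝ (Fin D) => |x i|) μ :=
    .of_bound (by fun_prop) 1 (hae.mono fun x hx => by simpa [hx] using PiLp.norm_apply_le x i)
  rw [integral_const_mul, integral_finsetSum _ fun i _ => hint i]
  simp only [integral_abs_apply_of_map_eq hae hinv, probReal_univ, Finset.sum_const,
    Finset.card_univ, Fintype.card_fin, nsmul_eq_mul]
  have hD1 : (1 : ℝ) < D := by exact_mod_cast (by omega : 1 < D)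
  have : (D : ℝ) - 1 ≠ 0 := by linarith
  have hΓ : Gamma ((D + 1) / 2) = (D - 1) / 2 * Gamma ((D - 1) / 2) := by
    rw [← Gamma_add_one (by linarith)]; ring_nf
  have : 0 < Gamma ((D - 1 : ℝ) / 2) := Gamma_pos_of_pos (by linarith)
  have : 0 < √π := sqrt_pos.mpr pi_pos
  have hsqrt : √(D : ℝ) ^ 2 = D := sq_sqrt (by positivity)
  rw [hΓ, sqrt_div' _ pi_pos.le]
  field_simp
  linear_combination -hsqrt
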